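/- The column span of GRS^q_{n,n-k}(α,v), with v_j = u_j^{-1}·(∏_{i≠j}(α_j−α_i))^{-1}, equals exactly the dual code of the column span of GRS^q_{n,k}(α,u) (not merely a subcode): the orthogonality relation together with a dimension count (rank k + rank (n−k) = n) gives equality. -/

import Mathlib

open Matrix Polynomial Finset

/-- Generator matrix of a Generalized Reed-Solomon code: entry (i,j) is `u i * (α i)^j`. -/
def GRS {F : Type*} [Field F] (n k : ℕ) (α u : Fin n → F) : Matrix (Fin n) (Fin k) F :=
  Matrix.of fun i j => u i * α i ^ (j : ℕ)

/-- The column span of a matrix, as a submodule of `Fin n → F`. -/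
def colSpan {F : Type*} [Field F] {n k : ℕ} (M : Matrix (Fin n) (Fin k) F) :
    Submodule F (Fin n → F) :=
  Submodule.span F (Set.range Mᵀ)

lemma key_sum {F : Type*} [Field F] {n : ℕ} (x : Fin n → F) (hx : Function.Injective x)
    (t : ℕ) (ht : t + 1 < n) :
    ∑ i, x i ^ t * (∏ l ∈ Finset.univ.erase i, (x i - x l))⁻¹ = 0 := by
  have hinj : Set.InjOn x (Finset.univ : Finset (Fin n)) := hx.injOn
  have hdeg : (X ^ t : F[X]).degree < ((Finset.univ : Finset (Fin n)).card : ℕ) := by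
    rw [degree_X_pow, card_univ, Fintype.card_fin]
    exact_mod_cast Nat.lt_of_succ_lt ht
  have h := Lagrange.eq_interpolate (f := (X ^ t : F[X])) hinj hdeg
  have h2 := congrArg (fun p => Polynomial.coeff p (n - 1)) h
  simp only [Lagrange.interpolate_apply, Polynomial.finset_sum_coeff, coeff_X_pow] at h2
  rw [if_neg (by omega)] at h2
  have hterm : ∀ i : Fin n,
      (C (eval (x i) (X ^ t : F[X])) * Lagrange.basis Finset.univ x i).coeff (n - 1)
        = x i ^ t * (∏ l ∈ Finset.univ.erase i, (x i - x l))⁻¹ := by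
    intro i
    rw [coeff_C_mul, eval_pow, eval_X]
    congr 1
    have hnd : (Lagrange.basis Finset.univ x i).natDegree = n - 1 := by
      rw [Lagrange.natDegree_basis hinj (mem_univ i), card_univ, Fintype.card_fin]
    rw [← hnd, Polynomial.coeff_natDegree, Lagrange.basis, leadingCoeff_prod,
      ← Finset.prod_inv_distrib]
    refine Finset.prod_congr rfl fun l _ => ?_
    rw [Lagrange.basisDivisor, leadingCoeff_mul, leadingCoeff_C,
      (monic_X_sub_C (x l)).leadingCoeff, mul_one]
  rw [Finset.sum_congr rfl (fun i _ => hterm i)] at h2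
  exact h2.symm

lemma grs_li {F : Type*} [Field F] {n k : ℕ} (hk : k ≤ n) (α u : Fin n → F)
    (hα : Function.Injective α) (hu : ∀ i, u i ≠ 0) :
    LinearIndependent F (fun j : Fin k => (GRS n k α u)ᵀ j) := by
  have hfull : LinearIndependent F (fun j : Fin n => (GRS n n α u)ᵀ j) := by
    show LinearIndependent F (GRS n n α u).col
    rw [Matrix.linearIndependent_cols_iff_isUnit]
    rw [Matrix.isUnit_iff_isUnit_det, isUnit_iff_ne_zero]
    have : GRS n n α u = Matrix.diagonal u * Matrix.vandermonde α := by
      ext i j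
      simp [GRS, Matrix.diagonal_mul, Matrix.vandermonde]
    rw [this, Matrix.det_mul, Matrix.det_diagonal, Matrix.det_vandermonde]
    refine mul_ne_zero (Finset.prod_ne_zero_iff.2 fun i _ => hu i)
      (Finset.prod_ne_zero_iff.2 fun i _ => Finset.prod_ne_zero_iff.2 fun j hj => ?_)
    exact sub_ne_zero_of_ne fun h => (Finset.mem_Ioi.mp hj).ne' (hα h)
  have hcomp : (fun j : Fin k => (GRS n k α u)ᵀ j)
      = (fun j : Fin n => (GRS n n α u)ᵀ j) ∘ Fin.castLE hk := by
    funext j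
    ext i
    simp [GRS]
  rw [hcomp]
  exact hfull.comp _ (Fin.castLE_injective hk)

theorem grs_dual_code_eq {F : Type*} [Field F] [Fintype F] (n k : ℕ) (hk : k ≤ n)
    (α u v : Fin n → F) (hα : Function.Injective α) (hu : ∀ i, u i ≠ 0)
    (hv : ∀ j, v j = (u j)⁻¹ * (∏ i ∈ Finset.univ.erase j, (α j - α i))⁻¹) :
    (colSpan (GRS n (n - k) α v) : Set (Fin n → F)) =
      {w : Fin n → F | ∀ c ∈ colSpan (GRS n k α u), w ⬝ᵥ c = 0} := by
  classical
  set G := GRS n k α u with hG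
  set A := GRS n (n - k) α v with hA
  -- the dual set is the kernel of Gᵀ.mulVecLin
  have hdualset : {w : Fin n → F | ∀ c ∈ colSpan G, w ⬝ᵥ c = 0}
      = (LinearMap.ker (Gᵀ).mulVecLin : Set (Fin n → F)) := by
    ext w
    simp only [Set.mem_setOf_eq, SetLike.mem_coe, LinearMap.mem_ker]
    constructor
    · intro h
      funext j
      have := h (Gᵀ j) (Submodule.subset_span ⟨j, rfl⟩)
      simpa [Matrix.mulVecLin_apply, Matrix.mulVec, Matrix.vecMul, dotProduct, mul_comm] using this
    · intro h c hc
      induction hc using Submodule.span_induction with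
      | mem c hc =>
        obtain ⟨j, rfl⟩ := hc
        have := congrFun h j
        simpa [Matrix.mulVecLin_apply, Matrix.mulVec, Matrix.vecMul, dotProduct, mul_comm] using this
      | zero => simp
      | add c d _ _ hc hd => rw [dotProduct_add, hc, hd, add_zero]
      | smul a c _ hc => rw [dotProduct_smul, hc, smul_zero]
  rw [hdualset]
  -- it suffices to prove equality of submodules
  have hle : colSpan A ≤ LinearMap.ker (Gᵀ).mulVecLin := by
    rw [colSpan, Submodule.span_le]
    rintro _ ⟨m, rfl⟩
    simp only [SetLike.mem_coe, LinearMap.mem_ker]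
    funext j
    simp only [Matrix.mulVecLin_apply, Matrix.mulVec, dotProduct, Pi.zero_apply]
    have ht : ((j : ℕ) + (m : ℕ)) + 1 < n := by
      have := j.isLt; have := m.isLt; omega
    have := key_sum α hα ((j : ℕ) + (m : ℕ)) ht
    rw [← this]
    refine Finset.sum_congr rfl fun i _ => ?_
    rw [hG, hA]
    simp only [GRS, transpose_apply, Matrix.of_apply, hv i]
    rw [pow_add]
    linear_combination (α i ^ (j : ℕ) * α i ^ (m : ℕ) *
      (∏ l ∈ Finset.univ.erase i, (α i - α l))⁻¹) * mul_inv_cancel₀ (hu i)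
  have hliA : LinearIndependent F (fun j : Fin (n - k) => Aᵀ j) :=
    grs_li (Nat.sub_le n k) α v hα (fun i => by
      rw [hv i]
      exact mul_ne_zero (inv_ne_zero (hu i)) (inv_ne_zero (Finset.prod_ne_zero_iff.2
        fun l hl => sub_ne_zero_of_ne fun h => (Finset.mem_erase.mp hl).1 (hα h).symm)))
  have hliG : LinearIndependent F (fun j : Fin k => Gᵀ j) := grs_li hk α u hα hu
  have hfA : Module.finrank F (colSpan A) = n - k := by
    rw [colSpan, finrank_span_eq_card hliA, Fintype.card_fin]
  have hfker : Module.finrank F (LinearMap.ker (Gᵀ).mulVecLin) = n - k := by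
    have hrn := LinearMap.finrank_range_add_finrank_ker (Gᵀ).mulVecLin
    have hdom : Module.finrank F (Fin n → F) = n := by simp
    have hrange : Module.finrank F (LinearMap.range (Gᵀ).mulVecLin) = k := by
      have h1 : Gᵀ.rank = G.rank := Matrix.rank_transpose G
      have h2 : G.rank = k := by
        rw [Matrix.rank_eq_finrank_span_cols]
        exact (finrank_span_eq_card hliG).trans (Fintype.card_fin k)
      have : Gᵀ.rank = Module.finrank F (LinearMap.range (Gᵀ).mulVecLin) := rfl
      omega
    omega
  exact congrArg (fun S : Submodule F (Fin n → F) => (S : Set (Fin n → F)))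
    (Submodule.eq_of_le_of_finrank_eq hle (by rw [hfA, hfker]))
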